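/- (Proposition 1, scalar case) Let λ > 0, γ > 0, β ∈ ℝ, and define Ψ(u) = |u| + γ|u - β| for u ∈ ℝ. Then for all z ∈ ℝ, prox_{λΨ}(z) = S_λ( S_{λγ}( z - β - λ·sign(β) ) + β + λ·sign(β) ), where S_t is soft-thresholding with threshold t, provided β ≠ 0. -/

import Mathlib

/-!
By the subgradient inequality, a point `M` with `z - M ∈ λ ∂Ψ(M)` is the unique minimiser of
`u ↦ (z - u)² / 2 + λ Ψ(u)`, the excess being at least `(u - M)² / 2`. Each soft-thresholding step
`y = S_t(x)` comes with a subgradient `s ∈ ∂|·|(y)` such that `x = y + t s`; composing the two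
steps of the formula gives `z - M = λ s + λγ r` with `s ∈ ∂|·|(M)`, and for `β > 0` the
subgradient `r` of the inner step also lies in `∂|·|(M - β)`: if `M > 0` the outer step is a
plain shift, so the inner output is `M - β`; if `M ≤ 0` both the inner output and `M - β` are
negative, where `∂|·| = {-1}`. The case `β < 0` follows by the symmetry `(z, β, u) ↦ (-z, -β, -u)`.
-/

noncomputable def softThresh (t x : ℝ) : ℝ := Real.sign x * max (|x| - t) 0

def IsAbsSubgradient (s x : ℝ) : Prop := |s| ≤ 1 ∧ s * x = |x|

namespace IsAbsSubgradient

variable {s x : ℝ}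

lemma add_mul_sub_le (h : IsAbsSubgradient s x) (y : ℝ) : |x| + s * (y - x) ≤ |y| := by
  have : s * y ≤ |y| := calc
    s * y ≤ |s * y| := le_abs_self _
    _ = |s| * |y| := abs_mul s y
    _ ≤ |y| := mul_le_of_le_one_left (abs_nonneg y) h.1
  linarith [h.2]

lemma neg (h : IsAbsSubgradient s x) : IsAbsSubgradient (-s) (-x) :=
  ⟨by rw [abs_neg]; exact h.1, by rw [abs_neg, neg_mul_neg]; exact h.2⟩

lemma eq_one (h : IsAbsSubgradient s x) (hx : 0 < x) : s = 1 := by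
  have := h.2
  rw [abs_of_pos hx] at this
  exact mul_right_cancel₀ hx.ne' (by rw [this, one_mul])

lemma eq_neg_one (h : IsAbsSubgradient s x) (hx : x < 0) : s = -1 :=
  neg_eq_iff_eq_neg.mp (h.neg.eq_one (neg_pos.mpr hx))

lemma add_mul_add_sub_le {r β γ : ℝ} (hs : IsAbsSubgradient s x)
    (hr : IsAbsSubgradient r (x - β)) (hγ : 0 ≤ γ) (y : ℝ) :
    |x| + γ * |x - β| + (s + γ * r) * (y - x) ≤ |y| + γ * |y - β| := by
  have hr' := mul_le_mul_of_nonneg_left (hr.add_mul_sub_le (y - β)) hγ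
  rw [sub_sub_sub_cancel_right] at hr'
  linarith [hs.add_mul_sub_le y]

end IsAbsSubgradient

lemma isAbsSubgradient_neg_one {x : ℝ} (hx : x ≤ 0) : IsAbsSubgradient (-1) x :=
  ⟨by norm_num, by rw [abs_of_nonpos hx]; ring⟩

lemma softThresh_neg (t x : ℝ) : softThresh t (-x) = -softThresh t x := by
  unfold softThresh; rw [Real.sign_neg, abs_neg]; ring

lemma softThresh_of_abs_le {t x : ℝ} (h : |x| ≤ t) : softThresh t x = 0 := by
  simp [softThresh, h]

lemma softThresh_of_lt {t x : ℝ} (ht : 0 ≤ t) (h : t < x) : softThresh t x = x - t := by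
  have hx : 0 < x := ht.trans_lt h
  rw [softThresh, Real.sign_of_pos hx, abs_of_pos hx, max_eq_left (by linarith), one_mul]

lemma exists_isAbsSubgradient_softThresh {t : ℝ} (ht : 0 ≤ t) (x : ℝ) :
    ∃ s, IsAbsSubgradient s (softThresh t x) ∧ x = softThresh t x + t * s := by
  rcases le_or_gt |x| t with hle | hgt
  · rcases ht.eq_or_lt with rfl | ht
    · rw [softThresh_of_abs_le hle]
      exact ⟨0, by simp [IsAbsSubgradient], by simpa using hle⟩
    refine ⟨x / t, ⟨?_, by simp [softThresh_of_abs_le hle]⟩, ?_⟩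
    · rw [abs_div, abs_of_pos ht]; exact div_le_one_of_le₀ hle ht.le
    · rw [softThresh_of_abs_le hle, mul_div_cancel₀ x ht.ne', zero_add]
  · rcases lt_abs.mp hgt with hx | hx
    · rw [softThresh_of_lt ht hx]
      exact ⟨1, ⟨by norm_num, by rw [abs_of_pos (by linarith)]; ring⟩, by ring⟩
    · have hS : softThresh t x = x + t := by
        nth_rewrite 1 [← neg_neg x]
        rw [softThresh_neg, softThresh_of_lt ht hx]; ring
      rw [hS]
      exact ⟨-1, isAbsSubgradient_neg_one (by linarith), by ring⟩

lemma prox_objective_lt_of_subgradient {Ψ : ℝ → ℝ} {lam g z M u : ℝ} (hlam : 0 ≤ lam)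
    (hg : ∀ v, Ψ M + g * (v - M) ≤ Ψ v) (hz : z - M = lam * g) (hu : u ≠ M) :
    (1/2) * (z - M)^2 + lam * Ψ M < (1/2) * (z - u)^2 + lam * Ψ u := by
  have hsq : 0 < (u - M)^2 := by positivity [sub_ne_zero.mpr hu]
  have hΨ := mul_le_mul_of_nonneg_left (hg u) hlam
  have hz' : z = M + lam * g := by linarith
  subst hz'
  nlinarith

noncomputable def csrProx (lam gam beta z : ℝ) : ℝ :=
  softThresh lam (softThresh (lam * gam) (z - beta - lam * Real.sign beta)
    + beta + lam * Real.sign beta)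

lemma csrProx_neg (lam gam beta z : ℝ) :
    csrProx lam gam (-beta) (-z) = -csrProx lam gam beta z := by
  unfold csrProx
  rw [Real.sign_neg, ← softThresh_neg]
  congr 1
  rw [show -z - -beta - lam * -beta.sign = -(z - beta - lam * beta.sign) by ring, softThresh_neg]
  ring

section

variable {lam gam beta : ℝ}

lemma exists_isAbsSubgradient_csrProx_of_pos (hlam : 0 ≤ lam) (hgam : 0 ≤ gam) (hbeta : 0 < beta)
    (z : ℝ) : ∃ s r, IsAbsSubgradient s (csrProx lam gam beta z) ∧
      IsAbsSubgradient r (csrProx lam gam beta z - beta) ∧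
      z - csrProx lam gam beta z = lam * (s + gam * r) := by
  obtain ⟨r, hr, hyr⟩ := exists_isAbsSubgradient_softThresh (mul_nonneg hlam hgam)
    (z - beta - lam)
  set y := softThresh (lam * gam) (z - beta - lam)
  obtain ⟨s, hs, hMs⟩ := exists_isAbsSubgradient_softThresh hlam (y + beta + lam)
  rw [csrProx, Real.sign_of_pos hbeta, mul_one]
  set M := softThresh lam (y + beta + lam)
  refine ⟨s, r, hs, ?_, by linear_combination hyr + hMs⟩
  rcases lt_or_ge 0 M with hpos | hnonpos
  · rw [hs.eq_one hpos, mul_one] at hMs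
    rwa [show M - beta = y by linarith]
  · have hs_le : lam * s ≤ lam := mul_le_of_le_one_right hlam (abs_le.mp hs.1).2
    have hy : y < 0 := by linarith
    rw [hr.eq_neg_one hy]
    exact isAbsSubgradient_neg_one (by linarith)

lemma exists_isAbsSubgradient_csrProx (hlam : 0 ≤ lam) (hgam : 0 ≤ gam) (hbeta : beta ≠ 0)
    (z : ℝ) : ∃ s r, IsAbsSubgradient s (csrProx lam gam beta z) ∧
      IsAbsSubgradient r (csrProx lam gam beta z - beta) ∧
      z - csrProx lam gam beta z = lam * (s + gam * r) := by
  rcases hbeta.lt_or_gt with hneg | hpos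
  · obtain ⟨s, r, hs, hr, hz⟩ :=
      exists_isAbsSubgradient_csrProx_of_pos hlam hgam (neg_pos.mpr hneg) (-z)
    rw [csrProx_neg] at hs hr hz
    refine ⟨-s, -r, by simpa using hs.neg, by convert hr.neg using 1; ring, by linarith⟩
  · exact exists_isAbsSubgradient_csrProx_of_pos hlam hgam hpos z

end

/-- Proposition 1 (scalar case): for Ψ(u) = |u| + γ|u - β| with β ≠ 0, the
proximal operator of λΨ at z is
S_λ( S_{λγ}( z - β - λ·sign(β) ) + β + λ·sign(β) ), i.e. this point is the
unique minimizer of u ↦ (1/2)(z-u)² + λΨ(u). -/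
theorem csr_prox_formula (lam gam beta z : ℝ) (hlam : 0 < lam) (hgam : 0 < gam)
    (hbeta : beta ≠ 0) :
    ∀ u : ℝ,
      u ≠ softThresh lam (softThresh (lam * gam) (z - beta - lam * Real.sign beta)
            + beta + lam * Real.sign beta) →
      (1/2) * (z - (softThresh lam (softThresh (lam * gam) (z - beta - lam * Real.sign beta)
            + beta + lam * Real.sign beta)))^2
        + lam * (|softThresh lam (softThresh (lam * gam) (z - beta - lam * Real.sign beta)
            + beta + lam * Real.sign beta)|
          + gam * |softThresh lam (softThresh (lam * gam) (z - beta - lam * Real.sign beta)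
            + beta + lam * Real.sign beta) - beta|) <
      (1/2) * (z - u)^2 + lam * (|u| + gam * |u - beta|) := by
  intro u hu
  obtain ⟨s, r, hs, hr, hz⟩ := exists_isAbsSubgradient_csrProx hlam.le hgam.le hbeta z
  exact prox_objective_lt_of_subgradient (Ψ := fun v => |v| + gam * |v - beta|) hlam.le
    (hs.add_mul_add_sub_le hr hgam.le) hz hu
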